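/- arXiv:2306.07558 — 4 statements merged into one kernel-verified Lean document; each statement's English description precedes it below -/
import Mathlib

section
/- In a descriptive proximity space, path-connectedness coincides with connectedness: for a set X with feature-vector map Φ : X → ℝ^m and descriptive proximity δ_Φ, any two points of X are joined by a descriptive proximal path if and only if for all nonempty subsets E, F ⊆ X with E ∪ F = X one has E δ_Φ F. -/
open Set

/-- An EF-proximity on a set `X`: a nearness relation on subsets satisfying
axioms (a)-(e). -/
structure Proximity (X : Type) where
  rel : Set X → Set X → Prop
  symm : ∀ E F, rel E F → rel F E
  union_iff : ∀ E F G, rel (E ∪ F) G ↔ (rel E G ∨ rel F G)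
  nonempty_of_rel : ∀ E F, rel E F → E.Nonempty ∧ F.Nonempty
  efremovic : ∀ E F, ¬ rel E F → ∃ G : Set X, ¬ rel E G ∧ ¬ rel Gᶜ F
  rel_of_inter_nonempty : ∀ E F, (E ∩ F).Nonempty → rel E F

/-- Proximal continuity of a map with respect to nearness relations on the
subsets of the domain and the codomain (a pc-map). -/
def IsPCRel {X Y : Type} (dX : Set X → Set X → Prop) (dY : Set Y → Set Y → Prop)
    (f : X → Y) : Prop :=
  ∀ E F : Set X, dX E F → dY (f '' E) (f '' F)

/-- The metric proximity on the unit interval `I = [0,1]`: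
`E δ_I F ↔ inf {|s - t| : s ∈ E, t ∈ F} = 0` (for nonempty `E`, `F`). -/
def MetricNear (E F : Set unitInterval) : Prop :=
  E.Nonempty ∧ F.Nonempty ∧
    sInf {d : ℝ | ∃ s ∈ E, ∃ t ∈ F, d = |(s : ℝ) - (t : ℝ)|} = 0

/-- The descriptive proximity determined by a feature-vector map `Φ : X → ℝ^m`:
`E δ_Φ F ↔ Q(E) ∩ Q(F) ≠ ∅`. -/
def DescNear {X : Type} {m : ℕ} (Φ : X → (Fin m → ℝ)) (E F : Set X) : Prop :=
  (Φ '' E ∩ Φ '' F).Nonempty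

lemma metricNear_of_cover (A B : Set unitInterval) (hA : A.Nonempty) (hB : B.Nonempty)
    (hcov : A ∪ B = Set.univ) : MetricNear A B := by
  refine ⟨hA, hB, ?_⟩
  set S := {d : ℝ | ∃ s ∈ A, ∃ t ∈ B, d = |(s : ℝ) - (t : ℝ)|} with hS
  have hbd : ∀ d ∈ S, (0:ℝ) ≤ d := by
    rintro d ⟨s, hs, t, ht, rfl⟩; exact abs_nonneg _
  obtain ⟨a0, ha0⟩ := hA
  obtain ⟨b0, hb0⟩ := hB
  have hSne : S.Nonempty := ⟨_, a0, ha0, b0, hb0, rfl⟩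
  have key : ∀ ε : ℝ, 0 < ε → ∃ d ∈ S, d < ε := by
    intro ε hε
    set U := ⋃ a ∈ A, Metric.ball a (ε/3) with hU
    set V := ⋃ b ∈ B, Metric.ball b (ε/3) with hV
    have hUo : IsOpen U := isOpen_biUnion fun _ _ => Metric.isOpen_ball
    have hVo : IsOpen V := isOpen_biUnion fun _ _ => Metric.isOpen_ball
    have hsub : (Set.univ : Set unitInterval) ⊆ U ∪ V := by
      intro x _
      have hx : x ∈ A ∪ B := by rw [hcov]; exact Set.mem_univ x
      rcases hx with hx | hx
      · exact Or.inl (Set.mem_biUnion hx (Metric.mem_ball_self (by linarith)))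
      · exact Or.inr (Set.mem_biUnion hx (Metric.mem_ball_self (by linarith)))
    have hUne : (Set.univ ∩ U).Nonempty :=
      ⟨a0, Set.mem_univ _, Set.mem_biUnion ha0 (Metric.mem_ball_self (by linarith))⟩
    have hVne : (Set.univ ∩ V).Nonempty :=
      ⟨b0, Set.mem_univ _, Set.mem_biUnion hb0 (Metric.mem_ball_self (by linarith))⟩
    obtain ⟨x, -, hxU, hxV⟩ := isPreconnected_univ U V hUo hVo hsub hUne hVne
    obtain ⟨a, ha, hxa⟩ := Set.mem_iUnion₂.1 hxU
    obtain ⟨b, hb, hxb⟩ := Set.mem_iUnion₂.1 hxV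
    refine ⟨|(a : ℝ) - (b : ℝ)|, ⟨a, ha, b, hb, rfl⟩, ?_⟩
    have h1 : |(x : ℝ) - (a : ℝ)| < ε/3 := by
      have := Metric.mem_ball.1 hxa
      rwa [Subtype.dist_eq, Real.dist_eq] at this
    have h2 : |(x : ℝ) - (b : ℝ)| < ε/3 := by
      have := Metric.mem_ball.1 hxb
      rwa [Subtype.dist_eq, Real.dist_eq] at this
    calc |(a : ℝ) - (b : ℝ)| ≤ |(a : ℝ) - (x : ℝ)| + |(x : ℝ) - (b : ℝ)| :=
          abs_sub_le _ _ _
      _ < ε := by rw [abs_sub_comm (a : ℝ)]; linarith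
  have h0 : (0:ℝ) ≤ sInf S := le_csInf hSne hbd
  have h1 : sInf S ≤ 0 := by
    refine le_of_forall_pos_le_add fun ε hε => ?_
    obtain ⟨d, hd, hdε⟩ := key ε hε
    have := csInf_le ⟨0, hbd⟩ hd
    linarith
  linarith

/-- In a descriptive proximity space, path-connectedness coincides with
connectedness. -/
theorem descriptive_path_connected_iff_connected {X : Type} {m : ℕ}
    (Φ : X → (Fin m → ℝ)) :
    (∀ x y : X, ∃ h : unitInterval → X,
      IsPCRel MetricNear (DescNear Φ) h ∧ h 0 = x ∧ h 1 = y) ↔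
    (∀ E F : Set X, E.Nonempty → F.Nonempty → E ∪ F = Set.univ → DescNear Φ E F) := by
  constructor
  · intro hpath E F hE hF hcov
    obtain ⟨x, hx⟩ := hE
    obtain ⟨y, hy⟩ := hF
    obtain ⟨h, hpc, h0, h1⟩ := hpath x y
    have hA : (h ⁻¹' E).Nonempty := ⟨0, by simp [Set.mem_preimage, h0, hx]⟩
    have hB : (h ⁻¹' F).Nonempty := ⟨1, by simp [Set.mem_preimage, h1, hy]⟩
    have hcov' : h ⁻¹' E ∪ h ⁻¹' F = Set.univ := by
      rw [← Set.preimage_union, hcov, Set.preimage_univ]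
    have hnear := hpc _ _ (metricNear_of_cover _ _ hA hB hcov')
    obtain ⟨v, hv1, hv2⟩ := hnear
    refine ⟨v, ?_, ?_⟩
    · exact Set.image_mono (f := Φ) (Set.image_preimage_subset h E) hv1
    · exact Set.image_mono (f := Φ) (Set.image_preimage_subset h F) hv2
  · intro hconn x y
    have hconst : ∀ z : X, Φ z = Φ x := by
      intro z
      by_contra hne
      have hres := hconn {w | Φ w = Φ x} {w | Φ w ≠ Φ x} ⟨x, rfl⟩ ⟨z, hne⟩
        (by ext w; simp [em])
      obtain ⟨v, ⟨w1, hw1, hv1⟩, ⟨w2, hw2, hv2⟩⟩ := hres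
      exact hw2 (hv2.trans (hv1.symm.trans hw1))
    refine ⟨fun t => if t = 0 then x else y, ?_, by simp, by norm_num⟩
    rintro A B ⟨⟨a, ha⟩, ⟨b, hb⟩, -⟩
    exact ⟨Φ x, ⟨_, Set.mem_image_of_mem _ ha, hconst _⟩,
      ⟨_, Set.mem_image_of_mem _ hb, hconst _⟩⟩
end

section
/- The composition of two proximal fibrations is a proximal fibration: if p₁ : (X₁, δ₁) → (Y₁, δ₁') and p₂ : (Y₁, δ₁') → (Y₂, δ₂') are proximal fibrations, then p₂ ∘ p₁ : (X₁, δ₁) → (Y₂, δ₂') is a proximal fibration. -/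
open Set

/-- A proximity `δ₁` on a product `X × Y` is compatible with nearness relations
`dX` on `X` and `dY` on `Y` if rectangles are near exactly when both pairs of
factors are near. -/
def ProdCompat {X Y : Type} (δ₁ : Proximity (X × Y)) (dX : Set X → Set X → Prop)
    (dY : Set Y → Set Y → Prop) : Prop :=
  ∀ (E₁ F₁ : Set X) (E₂ F₂ : Set Y),
    δ₁.rel (E₁ ×ˢ E₂) (F₁ ×ˢ F₂) ↔ (dX E₁ F₁ ∧ dY E₂ F₂)

/-- A pc-map `p : (X, δ) → (X', δ')` has the proximal homotopy lifting property
with respect to a proximity space `(X'', δ'')`. -/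
def HasPHLP {X X' X'' : Type} (dX : Set X → Set X → Prop) (dX' : Set X' → Set X' → Prop)
    (p : X → X') (δ'' : Proximity X'') : Prop :=
  ∀ (δ₁ : Proximity (X'' × unitInterval)), ProdCompat δ₁ δ''.rel MetricNear →
    ∀ k : X'' → X, IsPCRel δ''.rel dX k →
      ∀ G : X'' × unitInterval → X', IsPCRel δ₁.rel dX' G →
        (∀ x, p (k x) = G (x, 0)) →
        ∃ G' : X'' × unitInterval → X, IsPCRel δ₁.rel dX G' ∧
          (∀ x, G' (x, 0) = k x) ∧ ∀ x t, p (G' (x, t)) = G (x, t)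

/-- A proximal fibration: a pc-map having the PHLP with respect to every
proximity space. -/
def IsProxFibration {X X' : Type} (dX : Set X → Set X → Prop) (dX' : Set X' → Set X' → Prop)
    (p : X → X') : Prop :=
  IsPCRel dX dX' p ∧ ∀ (X'' : Type) (δ'' : Proximity X''), HasPHLP dX dX' p δ''

/-- The composition of two proximal fibrations is a proximal fibration. -/
theorem comp_isProxFibration {X₁ Y₁ Y₂ : Type}
    (δ₁ : Proximity X₁) (δ₁' : Proximity Y₁) (δ₂' : Proximity Y₂)
    (p₁ : X₁ → Y₁) (p₂ : Y₁ → Y₂)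
    (hp₁ : IsProxFibration δ₁.rel δ₁'.rel p₁)
    (hp₂ : IsProxFibration δ₁'.rel δ₂'.rel p₂) :
    IsProxFibration δ₁.rel δ₂'.rel (p₂ ∘ p₁) := by
  obtain ⟨hpc₁, hlift₁⟩ := hp₁
  obtain ⟨hpc₂, hlift₂⟩ := hp₂
  constructor
  · intro E F h
    have := hpc₂ _ _ (hpc₁ E F h)
    simpa [Set.image_image, Function.comp] using this
  · intro X'' δ'' δp hcompat k hk G hG h0
    -- first lift G through p₂ with initial map p₁ ∘ k
    have hk' : IsPCRel δ''.rel δ₁'.rel (p₁ ∘ k) := by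
      intro E F h
      have := hpc₁ _ _ (hk E F h)
      simpa [Set.image_image, Function.comp] using this
    obtain ⟨H, hHpc, hH0, hHp⟩ := hlift₂ X'' δ'' δp hcompat (p₁ ∘ k) hk' G hG
      (fun x => h0 x)
    -- then lift H through p₁ with initial map k
    obtain ⟨G', hG'pc, hG'0, hG'p⟩ := hlift₁ X'' δ'' δp hcompat k hk H hHpc
      (fun x => (hH0 x).symm)
    refine ⟨G', hG'pc, hG'0, fun x t => ?_⟩
    simp [Function.comp, hG'p x t, hHp x t]
end

section
/- Proximal cofibrations are invariant under proximal isomorphism: let h : (X, δ) → (X', δ') and h' : (Y, δ₁) → (Y', δ₁') be pc-maps, and let φ : (X, δ) → (Y, δ₁) and ψ : (X', δ') → (Y', δ₁') be proximal isomorphisms with h' ∘ φ = ψ ∘ h. Then h is a proximal cofibration if and only if h' is a proximal cofibration. -/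
open Set

/-- A proximal isomorphism: a bijective pc-map whose inverse is also a pc-map. -/
def IsProxIso {X Y : Type} (dX : Set X → Set X → Prop) (dY : Set Y → Set Y → Prop)
    (f : X → Y) : Prop :=
  Function.Bijective f ∧ IsPCRel dX dY f ∧
    ∃ g : Y → X, IsPCRel dY dX g ∧ Function.LeftInverse g f ∧ Function.RightInverse g f

/-- A pc-map `h : (X, δ) → (X', δ')` has the proximal homotopy extension
property with respect to a proximity space `(X'', δ'')`. -/
def HasPHEP {X X' X'' : Type} (dX : Set X → Set X → Prop) (dX' : Set X' → Set X' → Prop)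
    (h : X → X') (δ'' : Proximity X'') : Prop :=
  ∀ (δ₁ : Proximity (X × unitInterval)), ProdCompat δ₁ dX MetricNear →
    ∀ (δ₁' : Proximity (X' × unitInterval)), ProdCompat δ₁' dX' MetricNear →
      ∀ k : X' → X'', IsPCRel dX' δ''.rel k →
        ∀ F : X × unitInterval → X'', IsPCRel δ₁.rel δ''.rel F →
          (∀ x, k (h x) = F (x, 0)) →
          ∃ F' : X' × unitInterval → X'', IsPCRel δ₁'.rel δ''.rel F' ∧
            (∀ x', F' (x', 0) = k x') ∧ ∀ x t, F' (h x, t) = F (x, t)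

/-- A proximal cofibration: a pc-map having the PHEP with respect to every
proximity space. -/
def IsProxCofibration {X X' : Type} (dX : Set X → Set X → Prop) (dX' : Set X' → Set X' → Prop)
    (h : X → X') : Prop :=
  IsPCRel dX dX' h ∧ ∀ (X'' : Type) (δ'' : Proximity X''), HasPHEP dX dX' h δ''

/-- Pullback of a proximity along a bijection. -/
def pullbackProx {A B : Type} (f : A → B) (hf : Function.Bijective f)
    (δ : Proximity B) : Proximity A where
  rel E F := δ.rel (f '' E) (f '' F)
  symm E F h := δ.symm _ _ h
  union_iff E F G := by
    show δ.rel (f '' (E ∪ F)) _ ↔ δ.rel (f '' E) _ ∨ δ.rel (f '' F) _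
    rw [Set.image_union, δ.union_iff]
  nonempty_of_rel E F h := by
    obtain ⟨h1, h2⟩ := δ.nonempty_of_rel _ _ h
    exact ⟨h1.of_image, h2.of_image⟩
  efremovic E F h := by
    obtain ⟨G, hG1, hG2⟩ := δ.efremovic _ _ h
    refine ⟨f ⁻¹' G, ?_, ?_⟩
    · show ¬δ.rel (f '' E) (f '' (f ⁻¹' G))
      rwa [Set.image_preimage_eq _ hf.surjective]
    · show ¬δ.rel (f '' (f ⁻¹' G)ᶜ) (f '' F)
      rwa [← Set.preimage_compl, Set.image_preimage_eq _ hf.surjective]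
  rel_of_inter_nonempty E F h := by
    apply δ.rel_of_inter_nonempty
    rw [← Set.image_inter hf.injective]
    exact h.image f

theorem prodFst_image_prod {A B C : Type} (f : A → B) (E₁ : Set A) (E₂ : Set C) :
    (fun p : A × C => (f p.1, p.2)) '' (E₁ ×ˢ E₂) = (f '' E₁) ×ˢ E₂ := by
  rw [← Set.image_id E₂, Set.prod_image_image_eq, Set.image_id]
  rfl

theorem cofib_transfer {X X' Y Y' : Type}
    (δ : Proximity X) (δ' : Proximity X') (δ₁ : Proximity Y) (δ₁' : Proximity Y')
    (h : X → X') (h' : Y → Y')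
    (hh' : IsPCRel δ₁.rel δ₁'.rel h')
    (φ : X → Y) (hφ : IsProxIso δ.rel δ₁.rel φ)
    (ψ : X' → Y') (hψ : IsProxIso δ'.rel δ₁'.rel ψ)
    (hcomm : ∀ x, h' (φ x) = ψ (h x))
    (hc : IsProxCofibration δ.rel δ'.rel h) :
    IsProxCofibration δ₁.rel δ₁'.rel h' := by
  obtain ⟨hbφ, hpcφ, g, hpcg, hgl, hgr⟩ := hφ
  obtain ⟨hbψ, hpcψ, g', hpcg', hg'l, hg'r⟩ := hψ
  refine ⟨hh', ?_⟩
  intro X'' δ'' δ₂ hδ₂ δ₂' hδ₂' k hk F hF hF0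
  -- transported proximities on X × I and X' × I
  set Φ : X × unitInterval → Y × unitInterval := fun p => (φ p.1, p.2) with hΦdef
  set Ψ : X' × unitInterval → Y' × unitInterval := fun p => (ψ p.1, p.2) with hΨdef
  have hbΦ : Function.Bijective Φ := hbφ.prodMap Function.bijective_id
  have hbΨ : Function.Bijective Ψ := hbψ.prodMap Function.bijective_id
  have key : ∀ (E F : Set X), δ₁.rel (φ '' E) (φ '' F) ↔ δ.rel E F := by
    intro E F
    constructor
    · intro hr
      have := hpcg _ _ hr
      rwa [hgl.image_image, hgl.image_image] at this
    · exact hpcφ E F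
  have key' : ∀ (E F : Set X'), δ₁'.rel (ψ '' E) (ψ '' F) ↔ δ'.rel E F := by
    intro E F
    constructor
    · intro hr
      have := hpcg' _ _ hr
      rwa [hg'l.image_image, hg'l.image_image] at this
    · exact hpcψ E F
  have hcompat : ProdCompat (pullbackProx Φ hbΦ δ₂) δ.rel MetricNear := by
    intro E₁ F₁ E₂ F₂
    show δ₂.rel (Φ '' (E₁ ×ˢ E₂)) (Φ '' (F₁ ×ˢ F₂)) ↔ _
    rw [hΦdef, prodFst_image_prod, prodFst_image_prod, hδ₂, key]
  have hcompat' : ProdCompat (pullbackProx Ψ hbΨ δ₂') δ'.rel MetricNear := by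
    intro E₁ F₁ E₂ F₂
    show δ₂'.rel (Ψ '' (E₁ ×ˢ E₂)) (Ψ '' (F₁ ×ˢ F₂)) ↔ _
    rw [hΨdef, prodFst_image_prod, prodFst_image_prod, hδ₂', key']
  have hkψ : IsPCRel δ'.rel δ''.rel (k ∘ ψ) := by
    intro E F hr
    rw [Set.image_comp, Set.image_comp]
    exact hk _ _ (hpcψ _ _ hr)
  have hFΦ : IsPCRel (pullbackProx Φ hbΦ δ₂).rel δ''.rel (F ∘ Φ) := by
    intro E F' hr
    rw [Set.image_comp, Set.image_comp]
    exact hF _ _ hr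
  have h0 : ∀ x, (k ∘ ψ) (h x) = (F ∘ Φ) (x, 0) := by
    intro x
    simp only [Function.comp_apply, hΦdef, ← hcomm]
    exact hF0 (φ x)
  obtain ⟨F', hF'pc, hF'0, hF'ext⟩ :=
    hc.2 X'' δ'' (pullbackProx Φ hbΦ δ₂) hcompat (pullbackProx Ψ hbΨ δ₂') hcompat'
      (k ∘ ψ) hkψ (F ∘ Φ) hFΦ h0
  refine ⟨fun p => F' (g' p.1, p.2), ?_, ?_, ?_⟩
  · intro E F'' hr
    set Ψ' : Y' × unitInterval → X' × unitInterval := fun p => (g' p.1, p.2)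
    have himg : ∀ S : Set (Y' × unitInterval), Ψ '' (Ψ' '' S) = S := by
      intro S
      rw [← Set.image_comp]
      have : Ψ ∘ Ψ' = id := by
        funext p; simp [hΨdef, Ψ', hg'r p.1]
      rw [this, Set.image_id]
    have hrel : (pullbackProx Ψ hbΨ δ₂').rel (Ψ' '' E) (Ψ' '' F'') := by
      show δ₂'.rel (Ψ '' (Ψ' '' E)) (Ψ '' (Ψ' '' F''))
      rw [himg, himg]; exact hr
    have := hF'pc _ _ hrel
    rwa [← Set.image_comp, ← Set.image_comp] at this
  · intro y'
    have := hF'0 (g' y')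
    simpa [hg'r y'] using this
  · intro y t
    have hy : g' (h' y) = h (g y) := by
      have : ψ (h (g y)) = h' y := by rw [← hcomm, hgr y]
      rw [← this, hg'l]
    have := hF'ext (g y) t
    simp only [Function.comp_apply, hΦdef, hgr y] at this
    show F' (g' (h' y), t) = F (y, t)
    rw [hy, this]

/-- Proximal cofibrations are invariant under proximal isomorphism: given a
commutative square whose vertical maps are proximal isomorphisms, one
horizontal map is a proximal cofibration iff the other is. -/
theorem cofibration_iff_of_proxIso {X X' Y Y' : Type}
    (δ : Proximity X) (δ' : Proximity X') (δ₁ : Proximity Y) (δ₁' : Proximity Y')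
    (h : X → X') (h' : Y → Y')
    (hh : IsPCRel δ.rel δ'.rel h) (hh' : IsPCRel δ₁.rel δ₁'.rel h')
    (φ : X → Y) (hφ : IsProxIso δ.rel δ₁.rel φ)
    (ψ : X' → Y') (hψ : IsProxIso δ'.rel δ₁'.rel ψ)
    (hcomm : ∀ x, h' (φ x) = ψ (h x)) :
    IsProxCofibration δ.rel δ'.rel h ↔ IsProxCofibration δ₁.rel δ₁'.rel h' := by
  obtain ⟨hbφ, hpcφ, g, hpcg, hgl, hgr⟩ := hφ
  obtain ⟨hbψ, hpcψ, g', hpcg', hg'l, hg'r⟩ := hψ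
  constructor
  · exact cofib_transfer δ δ' δ₁ δ₁' h h' hh' φ ⟨hbφ, hpcφ, g, hpcg, hgl, hgr⟩
      ψ ⟨hbψ, hpcψ, g', hpcg', hg'l, hg'r⟩ hcomm
  · intro hc
    have hgiso : IsProxIso δ₁.rel δ.rel g :=
      ⟨⟨hgr.injective, hgl.surjective⟩, hpcg, φ, hpcφ, hgr, hgl⟩
    have hg'iso : IsProxIso δ₁'.rel δ'.rel g' :=
      ⟨⟨hg'r.injective, hg'l.surjective⟩, hpcg', ψ, hpcψ, hg'r, hg'l⟩
    have hcomm' : ∀ y, h (g y) = g' (h' y) := by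
      intro y
      have : ψ (h (g y)) = h' y := by rw [← hcomm, hgr y]
      rw [← this, hg'l]
    exact cofib_transfer δ₁ δ₁' δ δ' h' h hh g hgiso g' hg'iso hcomm' hc
end

section
/- The composition of two proximal cofibrations is a proximal cofibration: if h : (X, δ) → (X', δ') and h' : (X', δ') → (Y, δ₁) are proximal cofibrations, then h' ∘ h : (X, δ) → (Y, δ₁) is a proximal cofibration. -/
open Set

-- auxiliary lemmas
lemma Proximity.mono {Z : Type} (d : Proximity Z) {E E' F F' : Set Z}
    (hE : E ⊆ E') (hF : F ⊆ F') (h : d.rel E F) : d.rel E' F' := by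
  have h1 : d.rel E' F := by
    have := (d.union_iff E E' F).2 (Or.inl h)
    rwa [union_eq_self_of_subset_left hE] at this
  have h2 := d.symm _ _ h1
  have h3 := (d.union_iff F F' E').2 (Or.inl h2)
  rw [union_eq_self_of_subset_left hF] at h3
  exact d.symm _ _ h3

lemma Proximity.rel_biUnion {Z ι : Type} (d : Proximity Z) (S : Finset ι)
    (f : ι → Set Z) (E : Set Z) (h : d.rel (⋃ i ∈ S, f i) E) :
    ∃ i ∈ S, d.rel (f i) E := by
  classical
  induction S using Finset.induction with
  | empty =>
      simp only [Finset.notMem_empty, iUnion_of_empty, iUnion_empty] at h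
      exact absurd (d.nonempty_of_rel _ _ h).1 (by simp)
  | @insert a s ha ih =>
      rw [Finset.set_biUnion_insert] at h
      rcases (d.union_iff _ _ _).1 h with h1 | h2
      · exact ⟨a, Finset.mem_insert_self a s, h1⟩
      · obtain ⟨i, hi, hrel⟩ := ih h2
        exact ⟨i, Finset.mem_insert_of_mem hi, hrel⟩

/-- the slice of `A ⊆ Z × I` near time `t` within `ε`. -/
def pslice {Z : Type} (A : Set (Z × unitInterval)) (t : unitInterval) (ε : ℝ) : Set Z :=
  {z | ∃ s : unitInterval, (z, s) ∈ A ∧ |(s : ℝ) - (t : ℝ)| < ε}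

lemma pslice_mono {Z : Type} {A B : Set (Z × unitInterval)} {t : unitInterval}
    {ε ε' : ℝ} (hAB : A ⊆ B) (hε : ε ≤ ε') : pslice A t ε ⊆ pslice B t ε' := by
  rintro z ⟨s, hs, hd⟩; exact ⟨s, hAB hs, lt_of_lt_of_le hd hε⟩

lemma pslice_union {Z : Type} (A B : Set (Z × unitInterval)) (t : unitInterval) (ε : ℝ) :
    pslice (A ∪ B) t ε = pslice A t ε ∪ pslice B t ε := by
  ext z
  constructor
  · rintro ⟨s, hs | hs, hd⟩
    · exact Or.inl ⟨s, hs, hd⟩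
    · exact Or.inr ⟨s, hs, hd⟩
  · rintro (⟨s, hs, hd⟩ | ⟨s, hs, hd⟩)
    · exact ⟨s, Or.inl hs, hd⟩
    · exact ⟨s, Or.inr hs, hd⟩

def prel {Z : Type} (d : Proximity Z) (A B : Set (Z × unitInterval)) : Prop :=
  ∃ t : unitInterval, ∀ ε : ℝ, 0 < ε → d.rel (pslice A t ε) (pslice B t ε)

lemma prel_union_iff {Z : Type} (d : Proximity Z) (A B C : Set (Z × unitInterval)) :
    prel d (A ∪ B) C ↔ prel d A C ∨ prel d B C := by
  constructor
  · rintro ⟨t, H⟩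
    by_contra hcon
    push_neg at hcon
    obtain ⟨h1, h2⟩ := hcon
    rw [prel, not_exists] at h1
    rw [prel, not_exists] at h2
    have h1t := h1 t; have h2t := h2 t
    push_neg at h1t h2t
    obtain ⟨ε₁, hε₁, hn1⟩ := h1t
    obtain ⟨ε₂, hε₂, hn2⟩ := h2t
    have hε : (0:ℝ) < min ε₁ ε₂ := lt_min hε₁ hε₂
    have := H _ hε
    rw [pslice_union] at this
    rcases (d.union_iff _ _ _).1 this with hc | hc
    · exact hn1 (d.mono (pslice_mono (subset_refl A) (min_le_left _ _))
        (pslice_mono (subset_refl C) (min_le_left _ _)) hc)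
    · exact hn2 (d.mono (pslice_mono (subset_refl B) (min_le_right _ _))
        (pslice_mono (subset_refl C) (min_le_right _ _)) hc)
  · rintro (⟨t, H⟩ | ⟨t, H⟩)
    · exact ⟨t, fun ε hε => d.mono (pslice_mono subset_union_left le_rfl)
        (subset_refl _) (H ε hε)⟩
    · exact ⟨t, fun ε hε => d.mono (pslice_mono subset_union_right le_rfl)
        (subset_refl _) (H ε hε)⟩

lemma prel_efremovic {Z : Type} (d : Proximity Z) (A B : Set (Z × unitInterval))
    (hAB : ¬ prel d A B) :
    ∃ G : Set (Z × unitInterval), ¬ prel d A G ∧ ¬ prel d Gᶜ B := by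
  classical
  rw [prel, not_exists] at hAB
  have key : ∀ t : unitInterval, ∃ ε : ℝ, 0 < ε ∧
      ¬ d.rel (pslice A t ε) (pslice B t ε) := by
    intro t
    have := hAB t
    push_neg at this
    exact this
  choose ε hε hnd using key
  choose G hG1 hG2 using fun t => d.efremovic _ _ (hnd t)
  -- finite subcover of unitInterval by balls of radius ε t / 6
  have hcov : (univ : Set unitInterval) ⊆ ⋃ t : unitInterval, Metric.ball t (ε t / 6) := by
    intro t _
    exact mem_iUnion.2 ⟨t, Metric.mem_ball_self (by linarith [hε t])⟩
  obtain ⟨T, hT⟩ := isCompact_univ.elim_finite_subcover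
    (fun t : unitInterval => Metric.ball t (ε t / 6)) (fun t => Metric.isOpen_ball) hcov
  have hTne : T.Nonempty := by
    have := hT (mem_univ (0 : unitInterval))
    rw [mem_iUnion₂] at this
    obtain ⟨i, hi, _⟩ := this
    exact ⟨i, hi⟩
  set G' : Set (Z × unitInterval) :=
    {p | ∀ i ∈ T, |((p.2 : ℝ)) - (i : ℝ)| < ε i / 3 → p.1 ∈ G i} with hG'def
  refine ⟨G', ?_, ?_⟩
  · rintro ⟨t, H⟩
    have := hT (mem_univ t)
    rw [mem_iUnion₂] at this
    obtain ⟨i, hiT, hti⟩ := this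
    rw [Metric.mem_ball, Subtype.dist_eq, Real.dist_eq] at hti
    have hεi := hε i
    have hrel := H (ε i / 6) (by linarith)
    have hsubA : pslice A t (ε i / 6) ⊆ pslice A i (ε i) := by
      rintro z ⟨s, hs, hd'⟩
      refine ⟨s, hs, ?_⟩
      have : |(s : ℝ) - (i : ℝ)| ≤ |(s : ℝ) - (t : ℝ)| + |(t : ℝ) - (i : ℝ)| := abs_sub_le _ _ _
      linarith
    have hsubG : pslice G' t (ε i / 6) ⊆ G i := by
      rintro z ⟨s, hs, hd'⟩
      apply hs i hiT
      have : |(s : ℝ) - (i : ℝ)| ≤ |(s : ℝ) - (t : ℝ)| + |(t : ℝ) - (i : ℝ)| := abs_sub_le _ _ _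
      linarith
    exact hG1 i (d.mono hsubA hsubG hrel)
  · rintro ⟨t, H⟩
    set ε₀ : ℝ := (T.inf' hTne ε) / 3 with hε₀def
    have hε₀ : 0 < ε₀ := by
      have : 0 < T.inf' hTne ε := by
        obtain ⟨j, hj, hjeq⟩ := T.exists_mem_eq_inf' hTne ε
        rw [hjeq]; exact hε j
      exact div_pos this (by norm_num)
    have hε₀le : ∀ i ∈ T, ε₀ ≤ ε i / 3 := by
      intro i hi
      have := Finset.inf'_le ε hi
      rw [hε₀def]; linarith
    have hrel := H ε₀ hε₀
    set S : Finset unitInterval :=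
      T.filter (fun i => |(t : ℝ) - (i : ℝ)| < ε₀ + ε i / 3) with hSdef
    have hsub1 : pslice G'ᶜ t ε₀ ⊆ ⋃ i ∈ S, (G i)ᶜ := by
      rintro z ⟨s, hs, hd'⟩
      simp only [hG'def, mem_compl_iff, mem_setOf_eq, not_forall] at hs
      obtain ⟨i, hiT, hsi, hzi⟩ := hs
      have hti : |(t : ℝ) - (i : ℝ)| < ε₀ + ε i / 3 := by
        have h1 : |(t : ℝ) - (i : ℝ)| ≤ |(t : ℝ) - (s : ℝ)| + |(s : ℝ) - (i : ℝ)| :=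
          abs_sub_le _ _ _
        have h2 : |(t : ℝ) - (s : ℝ)| = |(s : ℝ) - (t : ℝ)| := abs_sub_comm _ _
        linarith
      exact mem_biUnion (Finset.mem_filter.2 ⟨hiT, hti⟩) hzi
    have hrel2 := d.mono hsub1 (subset_refl _) hrel
    obtain ⟨i, hiS, hrel3⟩ := d.rel_biUnion S (fun i => (G i)ᶜ) _ hrel2
    rw [hSdef, Finset.mem_filter] at hiS
    obtain ⟨hiT, hti⟩ := hiS
    have hsubB : pslice B t ε₀ ⊆ pslice B i (ε i) := by
      rintro z ⟨s, hs, hd'⟩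
      refine ⟨s, hs, ?_⟩
      have h1 : |(s : ℝ) - (i : ℝ)| ≤ |(s : ℝ) - (t : ℝ)| + |(t : ℝ) - (i : ℝ)| := abs_sub_le _ _ _
      have h2 := hε₀le i hiT
      linarith
    exact hG2 i (d.mono (subset_refl _) hsubB hrel3)

def prodProx {Z : Type} (d : Proximity Z) : Proximity (Z × unitInterval) where
  rel := prel d
  symm := by
    rintro A B ⟨t, H⟩
    exact ⟨t, fun ε hε => d.symm _ _ (H ε hε)⟩
  union_iff := fun A B C => prel_union_iff d A B C
  nonempty_of_rel := by
    rintro A B ⟨t, H⟩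
    obtain ⟨⟨z, s, hs, _⟩, ⟨z', s', hs', _⟩⟩ :=
      (d.nonempty_of_rel _ _ (H 1 one_pos)).imp id id
    exact ⟨⟨(z, s), hs⟩, ⟨(z', s'), hs'⟩⟩
  efremovic := fun A B h => prel_efremovic d A B h
  rel_of_inter_nonempty := by
    rintro A B ⟨⟨z, s⟩, hzA, hzB⟩
    refine ⟨s, fun ε hε => d.rel_of_inter_nonempty _ _ ⟨z, ⟨s, hzA, by simp [hε]⟩,
      ⟨s, hzB, by simp [hε]⟩⟩⟩


section
variable {Z : Type} (d : Proximity Z)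

lemma pslice_prod_subset (E₁ : Set Z) (E₂ : Set unitInterval) (t : unitInterval) (ε : ℝ) :
    pslice (E₁ ×ˢ E₂) t ε ⊆ E₁ := by
  rintro z ⟨s, ⟨hz, _⟩, _⟩; exact hz

lemma metricNear_iff (E₂ F₂ : Set unitInterval) :
    MetricNear E₂ F₂ ↔ ∃ t : unitInterval, ∀ ε : ℝ, 0 < ε →
      (∃ s ∈ E₂, |(s : ℝ) - (t : ℝ)| < ε) ∧ (∃ s ∈ F₂, |(s : ℝ) - (t : ℝ)| < ε) := by
  constructor
  · rintro ⟨hE, hF, hinf⟩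
    set D := {x : ℝ | ∃ s ∈ E₂, ∃ t ∈ F₂, x = |(s : ℝ) - (t : ℝ)|} with hD
    have hDne : D.Nonempty := by
      obtain ⟨s, hs⟩ := hE; obtain ⟨u, hu⟩ := hF
      exact ⟨_, s, hs, u, hu, rfl⟩
    -- for each n, points within 1/(n+1)
    have key : ∀ n : ℕ, ∃ s ∈ E₂, ∃ u ∈ F₂, |(s : ℝ) - (u : ℝ)| < 1 / (n + 1) := by
      intro n
      have hpos : (0:ℝ) < 1 / (n + 1) := by positivity
      have : sInf D < 1 / (n + 1) := by rw [hinf]; exact hpos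
      obtain ⟨x, hxD, hxlt⟩ := exists_lt_of_csInf_lt hDne this
      obtain ⟨s, hs, u, hu, hxe⟩ := hxD
      exact ⟨s, hs, u, hu, hxe ▸ hxlt⟩
    choose s hsE u huF hdist using key
    obtain ⟨a, -, φ, hφ, hconv⟩ := isCompact_univ.tendsto_subseq (fun n => mem_univ (s n))
    refine ⟨a, fun ε hε => ?_⟩
    rw [Metric.tendsto_atTop] at hconv
    obtain ⟨N, hN⟩ := hconv (ε / 2) (by linarith)
    obtain ⟨M, hM⟩ := exists_nat_one_div_lt (show (0:ℝ) < ε / 2 by linarith)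
    set n := max N M with hn
    have h1 : dist (s (φ n)) a < ε / 2 := hN n (le_max_left _ _)
    rw [Subtype.dist_eq, Real.dist_eq] at h1
    have h2 : 1 / ((φ n : ℝ) + 1) < ε / 2 := by
      have hφn : (M : ℝ) ≤ (φ n : ℝ) := by
        exact_mod_cast le_trans (le_max_right N M) (hφ.le_apply)
      calc 1 / ((φ n : ℝ) + 1) ≤ 1 / ((M : ℝ) + 1) := by
            apply one_div_le_one_div_of_le (by positivity) (by linarith)
        _ < ε / 2 := hM
    refine ⟨⟨s (φ n), hsE _, by linarith⟩, ⟨u (φ n), huF _, ?_⟩⟩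
    have h3 := hdist (φ n)
    have h4 : |(u (φ n) : ℝ) - (a : ℝ)| ≤
        |(u (φ n) : ℝ) - (s (φ n) : ℝ)| + |(s (φ n) : ℝ) - (a : ℝ)| := abs_sub_le _ _ _
    have h5 : |(u (φ n) : ℝ) - (s (φ n) : ℝ)| = |(s (φ n) : ℝ) - (u (φ n) : ℝ)| :=
      abs_sub_comm _ _
    linarith
  · rintro ⟨t, H⟩
    obtain ⟨⟨s₀, hs₀, _⟩, ⟨u₀, hu₀, _⟩⟩ := H 1 one_pos
    refine ⟨⟨s₀, hs₀⟩, ⟨u₀, hu₀⟩, ?_⟩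
    set D := {x : ℝ | ∃ s ∈ E₂, ∃ t ∈ F₂, x = |(s : ℝ) - (t : ℝ)|} with hD
    have hDne : D.Nonempty := ⟨_, s₀, hs₀, u₀, hu₀, rfl⟩
    have hbdd : BddBelow D := ⟨0, by rintro x ⟨s, _, u, _, rfl⟩; exact abs_nonneg _⟩
    have hge : 0 ≤ sInf D := le_csInf hDne (by rintro x ⟨s, _, u, _, rfl⟩; exact abs_nonneg _)
    have hle : sInf D ≤ 0 := by
      by_contra hcon
      push_neg at hcon
      obtain ⟨⟨s, hs, hst⟩, ⟨u, hu, hut⟩⟩ := H (sInf D / 2) (by linarith)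
      have hmem : |(s : ℝ) - (u : ℝ)| ∈ D := ⟨s, hs, u, hu, rfl⟩
      have : |(s : ℝ) - (u : ℝ)| < sInf D := by
        have := abs_sub_le (s : ℝ) (t : ℝ) (u : ℝ)
        have h2 : |(t : ℝ) - (u : ℝ)| = |(u : ℝ) - (t : ℝ)| := abs_sub_comm _ _
        linarith
      exact absurd (csInf_le hbdd hmem) (not_le.2 this)
    linarith

lemma prodProx_compat : ProdCompat (prodProx d) d.rel MetricNear := by
  intro E₁ F₁ E₂ F₂
  constructor
  · rintro ⟨t, H⟩
    have h1 := H 1 one_pos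
    constructor
    · exact d.mono (pslice_prod_subset E₁ E₂ t 1) (pslice_prod_subset F₁ F₂ t 1) h1
    · rw [metricNear_iff]
      refine ⟨t, fun ε hε => ?_⟩
      obtain ⟨⟨z, s, ⟨_, hsE⟩, hd'⟩, ⟨z', s', ⟨_, hsF⟩, hd''⟩⟩ := d.nonempty_of_rel _ _ (H ε hε)
      exact ⟨⟨s, hsE, hd'⟩, ⟨s', hsF, hd''⟩⟩
  · rintro ⟨hd1, hmn⟩
    rw [metricNear_iff] at hmn
    obtain ⟨t, H⟩ := hmn
    refine ⟨t, fun ε hε => ?_⟩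
    obtain ⟨⟨s, hsE, hsd⟩, ⟨u, huF, hud⟩⟩ := H ε hε
    refine d.mono (?_ : E₁ ⊆ _) (?_ : F₁ ⊆ _) hd1
    · intro z hz; exact ⟨s, ⟨hz, hsE⟩, hsd⟩
    · intro z hz; exact ⟨u, ⟨hz, huF⟩, hud⟩

end

-- main theorem pieces
lemma isPCRel_comp {X Y Z : Type} {dX : Set X → Set X → Prop} {dY : Set Y → Set Y → Prop}
    {dZ : Set Z → Set Z → Prop} {f : X → Y} {g : Y → Z}
    (hf : IsPCRel dX dY f) (hg : IsPCRel dY dZ g) : IsPCRel dX dZ (g ∘ f) := by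
  intro E F h
  rw [image_comp, image_comp]
  exact hg _ _ (hf _ _ h)

theorem comp_isProxCofibration' {X X' Y : Type}
    (δ : Proximity X) (δ' : Proximity X') (δ₁ : Proximity Y)
    (h : X → X') (h' : X' → Y)
    (hh : IsProxCofibration δ.rel δ'.rel h)
    (hh' : IsProxCofibration δ'.rel δ₁.rel h') :
    IsProxCofibration δ.rel δ₁.rel (h' ∘ h) := by
  obtain ⟨hpc, hPHEP⟩ := hh
  obtain ⟨hpc', hPHEP'⟩ := hh'
  refine ⟨isPCRel_comp hpc hpc', ?_⟩
  intro X'' δ'' δp hδp δp' hδp' k hk F hF hk0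
  -- intermediate compatible proximity on X' × I
  have hcompat2 := prodProx_compat δ'
  -- extend along h, with k ∘ h' as the initial map on X'
  obtain ⟨G, hGpc, hG0, hGh⟩ := hPHEP X'' δ'' δp hδp (prodProx δ') hcompat2
    (k ∘ h') (isPCRel_comp hpc' hk) F hF (fun x => hk0 x)
  -- extend along h'
  obtain ⟨F', hF'pc, hF'0, hF'h⟩ := hPHEP' X'' δ'' (prodProx δ') hcompat2 δp' hδp'
    k hk G hGpc (fun x' => (hG0 x').symm)
  exact ⟨F', hF'pc, hF'0, fun x t => by rw [show (h' ∘ h) x = h' (h x) from rfl, hF'h, hGh]⟩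

/-- The composition of two proximal cofibrations is a proximal cofibration. -/
theorem comp_isProxCofibration {X X' Y : Type}
    (δ : Proximity X) (δ' : Proximity X') (δ₁ : Proximity Y)
    (h : X → X') (h' : X' → Y)
    (hh : IsProxCofibration δ.rel δ'.rel h)
    (hh' : IsProxCofibration δ'.rel δ₁.rel h') :
    IsProxCofibration δ.rel δ₁.rel (h' ∘ h) := by
  exact comp_isProxCofibration' δ δ' δ₁ h h' hh hh'
end
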